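/- Consider the sequential CAVI system on [0,1]²: ζ_{k+1} = f_β(ξ_k), ξ_{k+1} = f_β(ζ_{k+1}), with f_β(x) = 1/(1 + exp(−2β(2x−1))). If |β| < 1, then for every initialization (ζ₀, ξ₀) ∈ [0,1]² the iterates (ζ_k, ξ_k) converge to (1/2, 1/2). -/

import Mathlib

noncomputable def f (β x : ℝ) : ℝ := 1 / (1 + Real.exp (-2*β*(2*x-1)))

/-!
`f β` is the logistic sigmoid composed with `x ↦ 2β(2x - 1)`. The sigmoid has derivative
`σ(1 - σ) ≤ 1/4`, so `f β` is `|β|`-Lipschitz, and it fixes `1/2`; for `|β| < 1` it is a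
contraction, whose iterates converge to `1/2`. The sequential updates make `ξ k` and `ζ (k + 1)`
the even and odd iterates of `f β` at `ξ 0`.
-/

open Filter Topology Real Function

lemma sigmoid_mul_one_sub_le (x : ℝ) : sigmoid x * (1 - sigmoid x) ≤ 4⁻¹ := by
  nlinarith [sq_nonneg (sigmoid x - 2⁻¹)]

lemma lipschitzWith_sigmoid : LipschitzWith 4⁻¹ sigmoid := by
  refine lipschitzWith_of_nnnorm_deriv_le differentiable_sigmoid fun x => ?_
  rw [← NNReal.coe_le_coe, coe_nnnorm, deriv_sigmoid, Real.norm_of_nonneg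
    (mul_nonneg (sigmoid_nonneg x) (sub_nonneg.2 (sigmoid_le_one x)))]
  simpa using sigmoid_mul_one_sub_le x

lemma f_eq_sigmoid (β x : ℝ) : f β x = sigmoid (2 * β * (2 * x - 1)) := by
  rw [f, sigmoid_def, one_div, neg_mul, neg_mul]

lemma f_half (β : ℝ) : f β (1 / 2) = 1 / 2 := by
  norm_num [f_eq_sigmoid, sigmoid_zero]

lemma lipschitzWith_f (β : ℝ) : LipschitzWith ‖β‖₊ (f β) := by
  refine LipschitzWith.of_dist_le_mul fun x y => ?_
  have h := lipschitzWith_sigmoid.dist_le_mul (2 * β * (2 * x - 1)) (2 * β * (2 * y - 1))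
  rw [f_eq_sigmoid, f_eq_sigmoid, coe_nnnorm]
  calc _ ≤ 4⁻¹ * dist (2 * β * (2 * x - 1)) (2 * β * (2 * y - 1)) := by simpa using h
    _ = ‖β‖ * dist x y := by
      rw [Real.dist_eq, Real.dist_eq, show 2 * β * (2 * x - 1) - 2 * β * (2 * y - 1)
        = 4 * (β * (x - y)) by ring, abs_mul, abs_mul, Real.norm_eq_abs]
      norm_num
      ring

lemma contractingWith_f {β : ℝ} (hβ : |β| < 1) : ContractingWith ‖β‖₊ (f β) :=
  ⟨by simpa [← NNReal.coe_lt_coe] using hβ, lipschitzWith_f β⟩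

lemma tendsto_iterate_f {β : ℝ} (hβ : |β| < 1) (x : ℝ) :
    Tendsto (fun n => (f β)^[n] x) atTop (𝓝 (1 / 2)) := by
  have hf := contractingWith_f hβ
  rw [hf.fixedPoint_unique (f_half β)]
  exact hf.tendsto_iterate_fixedPoint x

section Alternating

variable {α : Type*} {g : α → α} {ζ ξ : ℕ → α}

lemma eq_iterate_two_mul_of_alternating (hζ : ∀ k, ζ (k + 1) = g (ξ k))
    (hξ : ∀ k, ξ (k + 1) = g (ζ (k + 1))) (k : ℕ) : ξ k = g^[2 * k] (ξ 0) := by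
  induction k with
  | zero => rfl
  | succ k ih =>
    rw [hξ, hζ, ih, ← iterate_succ_apply' g, ← iterate_succ_apply' g]
    rfl

lemma tendsto_of_alternating [TopologicalSpace α] {p : α}
    (hζ : ∀ k, ζ (k + 1) = g (ξ k)) (hξ : ∀ k, ξ (k + 1) = g (ζ (k + 1)))
    (hg : Tendsto (fun n => g^[n] (ξ 0)) atTop (𝓝 p)) :
    Tendsto ζ atTop (𝓝 p) ∧ Tendsto ξ atTop (𝓝 p) := by
  have hξ_eq := eq_iterate_two_mul_of_alternating hζ hξ
  have hζ_eq (k : ℕ) : ζ (k + 1) = g^[2 * k + 1] (ξ 0) := by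
    rw [hζ, hξ_eq, iterate_succ_apply']
  have h_odd : Tendsto (fun k : ℕ => 2 * k + 1) atTop atTop :=
    tendsto_atTop_mono (fun k => show k ≤ 2 * k + 1 by omega) tendsto_id
  have h_even : Tendsto (fun k : ℕ => 2 * k) atTop atTop :=
    tendsto_atTop_mono (fun k => show k ≤ 2 * k by omega) tendsto_id
  constructor
  · rw [← tendsto_add_atTop_iff_nat 1, funext hζ_eq]
    exact hg.comp h_odd
  · rw [funext hξ_eq]
    exact hg.comp h_even

end Alternating

theorem stmt15_general (β : ℝ) (hβ : |β| < 1) (ζ ξ : ℕ → ℝ)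
    (hζ : ∀ k, ζ (k+1) = f β (ξ k)) (hξ : ∀ k, ξ (k+1) = f β (ζ (k+1))) :
    Filter.Tendsto ζ Filter.atTop (nhds (1/2)) ∧
    Filter.Tendsto ξ Filter.atTop (nhds (1/2)) :=
  tendsto_of_alternating hζ hξ (tendsto_iterate_f hβ (ξ 0))

theorem stmt15 (β : ℝ) (hβ : |β| < 1) (ζ ξ : ℕ → ℝ)
    (h0 : ζ 0 ∈ Set.Icc (0:ℝ) 1) (h0' : ξ 0 ∈ Set.Icc (0:ℝ) 1)
    (hζ : ∀ k, ζ (k+1) = f β (ξ k)) (hξ : ∀ k, ξ (k+1) = f β (ζ (k+1))) :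
    Filter.Tendsto ζ Filter.atTop (nhds (1/2)) ∧
    Filter.Tendsto ξ Filter.atTop (nhds (1/2)) :=
  stmt15_general β hβ ζ ξ hζ hξ
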